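/- The exponential generating functions satisfy S(x,q;z) = S(x,z)^q, i.e., Σ_{n≥0} S_n(x,q) z^n/n! = (Σ_{n≥0} S_n(x) z^n/n!)^q, where S_n(x,q) satisfies S_{n+1}(x,q) = (q+nx)S_n(x,q) + x(1-2x)∂_x S_n(x,q), S_0=1, and S_n(x) = S_n(x,1). -/

import Mathlib

open Polynomial in
/-- The bivariate polynomials `S_n(x,q)`, as polynomials in `x` over `ℚ[q]`, defined by
`S_0 = 1` and `S_{n+1}(x,q) = (q + n x)·S_n(x,q) + x(1-2x)·∂_x S_n(x,q)`.
Here the inner variable is `q` and the outer variable is `x`. -/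
noncomputable def SqA : ℕ → Polynomial (Polynomial ℚ)
  | 0 => 1
  | n + 1 =>
      (Polynomial.C Polynomial.X + Polynomial.C ((n : ℚ) • (1 : Polynomial ℚ)) * X) * SqA n +
        X * (1 - 2 * X) * (SqA n).derivative

/-- `S_n(x) = S_n(x,1)`: the specialization of `S_n(x,q)` at `q = 1`. -/
noncomputable def SxA (n : ℕ) : Polynomial (Polynomial ℚ) :=
  (SqA n).map ((Polynomial.C : ℚ →+* Polynomial ℚ).comp (Polynomial.evalRingHom (1 : ℚ)))

/-- Formal derivative `d/dz` of a power series. -/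
noncomputable def Dz (F : PowerSeries (Polynomial (Polynomial ℚ))) :
    PowerSeries (Polynomial (Polynomial ℚ)) :=
  PowerSeries.mk fun n => (n + 1) • PowerSeries.coeff (n + 1) F

/-- The exponential generating function `S(x,q;z) = Σ_{n≥0} S_n(x,q) zⁿ/n!`. -/
noncomputable def SserQ : PowerSeries (Polynomial (Polynomial ℚ)) :=
  PowerSeries.mk fun n => ((n.factorial : ℚ)⁻¹) • SqA n

/-- The exponential generating function `S(x,z) = Σ_{n≥0} S_n(x) zⁿ/n!`. -/
noncomputable def Sser1 : PowerSeries (Polynomial (Polynomial ℚ)) :=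
  PowerSeries.mk fun n => ((n.factorial : ℚ)⁻¹) • SxA n

/-- The exponential `exp(F) = Σ_j F^j/j!` of a power series `F` with zero constant
term (each coefficient is a finite sum since `F^j` has order at least `j`). -/
noncomputable def myExp (F : PowerSeries (Polynomial (Polynomial ℚ))) :
    PowerSeries (Polynomial (Polynomial ℚ)) :=
  PowerSeries.mk fun m =>
    ∑ j ∈ Finset.range (m + 1), ((j.factorial : ℚ)⁻¹) • PowerSeries.coeff m (F ^ j)

/-!
Both sides are exponential generating functions solving the first-order PDE
`(1 - x z) F_z = b F + x(1-2x) F_x` with `b = q`, whose solution with constant term `1` is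
unique, because the equation determines the `(n+1)`-st coefficient from the `n`-th; the recursion
for `S_n(x,q)` is exactly this equation read coefficientwise. For `S(x,z)` (where `b = 1`) the
hypothesis on `L` says `S_z = L_z S`, so `S = exp L`, hence also `S_x = L_x S`; dividing the PDE
for `S` by `S` gives `L_z = 1 + x z L_z + x(1-2x) L_x`. Since every derivation `D` continuous for
the `z`-adic topology satisfies `D (exp F) = D F · exp F`, multiplying this identity by
`q exp(qL)` shows that `exp(qL)` solves the PDE with `b = q`.
-/

open PowerSeries

theorem inv_factorial_succ_mul_succ (n : ℕ) :
    ((n + 1).factorial : ℚ)⁻¹ * (n + 1 : ℕ) = (n.factorial : ℚ)⁻¹ := by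
  rw [Nat.factorial_succ]
  push_cast
  field_simp

section ExpSum

variable {A : Type*} [CommRing A] [Algebra ℚ A]

noncomputable def expSum (a : A) (N : ℕ) : A :=
  ∑ j ∈ Finset.range N, (j.factorial : ℚ)⁻¹ • a ^ j

theorem expSum_succ (a : A) (N : ℕ) :
    expSum a (N + 1) = expSum a N + (N.factorial : ℚ)⁻¹ • a ^ N :=
  Finset.sum_range_succ _ _

theorem Derivation.map_expSum_succ (D : Derivation ℚ A A) (a : A) (N : ℕ) :
    D (expSum a (N + 1)) = D a * expSum a N := by
  induction N with
  | zero => simp [expSum]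
  | succ N ih =>
    rw [expSum_succ, map_add, ih, D.map_smul, D.leibniz_pow, expSum_succ, Nat.add_sub_cancel,
      smul_comm, ← Nat.cast_smul_eq_nsmul ℚ, smul_smul, mul_comm ((N + 1 : ℕ) : ℚ),
      inv_factorial_succ_mul_succ, smul_eq_mul, mul_add, mul_smul_comm, mul_comm (D a) (a ^ N)]

end ExpSum

section Derivative

variable {R : Type*}

theorem PowerSeries.derivative_C_mul [CommSemiring R] (a : R) (f : R⟦X⟧) :
    d⁄dX R (C a * f) = C a * d⁄dX R f := by
  rw [← smul_eq_C_mul, Derivation.map_smul, smul_eq_C_mul]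

theorem PowerSeries.coeff_X_mul_derivative [CommSemiring R] (f : R⟦X⟧) (n : ℕ) :
    coeff n (X * d⁄dX R f) = n * coeff n f := by
  cases n with
  | zero => simp
  | succ n => rw [coeff_succ_X_mul, coeff_derivative, mul_comm]; push_cast; rfl

theorem PowerSeries.coeff_pow_eq_zero_of_lt [CommSemiring R] {f : R⟦X⟧}
    (hf : constantCoeff f = 0) {m j : ℕ} (h : m < j) : coeff m (f ^ j) = 0 :=
  X_pow_dvd_iff.mp (pow_dvd_pow_of_dvd (X_dvd_iff.mpr hf) j) m h

theorem PowerSeries.X_pow_dvd_derivative [CommSemiring R] {f : R⟦X⟧} {n : ℕ}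
    (h : X ^ (n + 1) ∣ f) : X ^ n ∣ d⁄dX R f := by
  obtain ⟨g, rfl⟩ := h
  rw [Derivation.leibniz, Derivation.leibniz_pow, derivative_X, Nat.add_sub_cancel]
  simp only [smul_eq_mul, nsmul_eq_mul, mul_one]
  exact dvd_add (dvd_mul_of_dvd_left (pow_dvd_pow _ n.le_succ) _)
    (dvd_mul_of_dvd_right (dvd_mul_left _ _) _)

theorem PowerSeries.eq_of_derivative_eq_mul [CommRing R] [IsAddTorsionFree R] {f g a : R⟦X⟧}
    (hf : d⁄dX R f = a * f) (hg : d⁄dX R g = a * g) (h0 : constantCoeff f = constantCoeff g) :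
    f = g := by
  rw [← sub_eq_zero]
  have hd : d⁄dX R (f - g) = a * (f - g) := by rw [map_sub, hf, hg, mul_sub]
  refine PowerSeries.ext fun n => ?_
  rw [map_zero]
  induction n using Nat.strong_induction_on with
  | _ n ih =>
    cases n with
    | zero => simp [h0]
    | succ n =>
      have hc := congrArg (coeff n) hd
      rw [coeff_derivative, coeff_mul, Finset.sum_eq_zero fun p hp => by
        rw [ih p.2 (by have := Finset.HasAntidiagonal.mem_antidiagonal.mp hp; omega),
          mul_zero]] at hc
      rw [← smul_right_inj n.succ_ne_zero, smul_zero, nsmul_eq_mul, mul_comm]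
      exact_mod_cast hc

end Derivative

section MapPowerSeries

variable {S R : Type*} [CommSemiring S] [CommSemiring R] [Algebra S R]

noncomputable def Derivation.mapPowerSeries (δ : Derivation S R R) :
    Derivation S R⟦X⟧ R⟦X⟧ where
  toFun f := PowerSeries.mk fun n => δ (coeff n f)
  map_add' f g := by ext n; simp
  map_smul' s f := by ext n; simp
  map_one_eq_zero' := by
    ext n
    simp only [LinearMap.coe_mk, AddHom.coe_mk, coeff_mk, coeff_one, map_zero]
    split_ifs <;> simp
  leibniz' f g := by
    ext n
    simp only [LinearMap.coe_mk, AddHom.coe_mk, coeff_mk, smul_eq_mul, map_add, coeff_mul,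
      map_sum, δ.leibniz, Finset.sum_add_distrib]
    congr 1
    rw [← Finset.Nat.sum_antidiagonal_swap]
    rfl

@[simp]
theorem Derivation.coeff_mapPowerSeries (δ : Derivation S R R) (f : R⟦X⟧) (n : ℕ) :
    coeff n (δ.mapPowerSeries f) = δ (coeff n f) :=
  PowerSeries.coeff_mk (R := R) n fun n => δ (coeff n f)

theorem Derivation.mapPowerSeries_C (δ : Derivation S R R) (a : R) :
    δ.mapPowerSeries (C a) = C (δ a) := by
  ext n
  rw [coeff_mapPowerSeries, coeff_C, coeff_C]
  split_ifs <;> simp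

theorem Derivation.X_pow_dvd_mapPowerSeries (δ : Derivation S R R) {f : R⟦X⟧} {n : ℕ}
    (h : X ^ n ∣ f) : X ^ n ∣ δ.mapPowerSeries f := by
  rw [X_pow_dvd_iff] at h ⊢
  intro m hm
  rw [coeff_mapPowerSeries, h m hm, map_zero]

end MapPowerSeries

section Bivariate

local notation "𝒫" => Polynomial (Polynomial ℚ)

variable {F : 𝒫⟦X⟧}

theorem X_pow_dvd_myExp_sub_expSum (hF : constantCoeff F = 0) (N : ℕ) :
    X ^ N ∣ myExp F - expSum F N := by
  refine X_pow_dvd_iff.mpr fun m hm => ?_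
  rw [map_sub, sub_eq_zero, myExp, coeff_mk, expSum, map_sum]
  simp only [coeff_smul]
  refine Finset.sum_subset (Finset.range_subset_range.mpr hm) fun j _ hj => ?_
  rw [coeff_pow_eq_zero_of_lt hF (by simpa using hj), smul_zero]

theorem constantCoeff_myExp : constantCoeff (myExp F) = 1 := by
  rw [← coeff_zero_eq_constantCoeff_apply, myExp, coeff_mk]
  simp

theorem Derivation.map_myExp (D : Derivation ℚ 𝒫⟦X⟧ 𝒫⟦X⟧)
    (hD : ∀ (n : ℕ) (f : 𝒫⟦X⟧), X ^ (n + 1) ∣ f → X ^ n ∣ D f) (hF : constantCoeff F = 0) :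
    D (myExp F) = D F * myExp F := by
  refine PowerSeries.ext fun n => ?_
  rw [← sub_eq_zero, ← map_sub]
  refine X_pow_dvd_iff.mp ?_ n n.lt_succ_self
  have h : D (myExp F) - D F * myExp F =
      D (myExp F - expSum F (n + 2)) - D F * (myExp F - expSum F (n + 1)) := by
    rw [map_sub, D.map_expSum_succ]
    ring
  rw [h]
  exact dvd_sub (hD _ _ (X_pow_dvd_myExp_sub_expSum hF _))
    (dvd_mul_of_dvd_right (X_pow_dvd_myExp_sub_expSum hF _) _)

theorem derivative_myExp (hF : constantCoeff F = 0) :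
    d⁄dX 𝒫 (myExp F) = d⁄dX 𝒫 F * myExp F :=
  -- Instance search would find `PowerSeries.algebraPolynomial`, under which `x` acts as `X`;
  -- `d⁄dX 𝒫` is linear for the action by constants.
  letI : Algebra 𝒫 𝒫⟦X⟧ := MvPowerSeries.instAlgebra
  ((d⁄dX 𝒫).restrictScalars ℚ).map_myExp (fun _ _ => X_pow_dvd_derivative) hF

noncomputable def xDeriv : Derivation ℚ 𝒫⟦X⟧ 𝒫⟦X⟧ :=
  ((Polynomial.derivative' (R := Polynomial ℚ)).restrictScalars ℚ).mapPowerSeries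

theorem coeff_xDeriv (F : 𝒫⟦X⟧) (n : ℕ) :
    coeff n (xDeriv F) = Polynomial.derivative (coeff n F) := by
  simp [xDeriv]

theorem xDeriv_C_C_mul (a : Polynomial ℚ) (F : 𝒫⟦X⟧) :
    xDeriv (C (Polynomial.C a) * F) = C (Polynomial.C a) * xDeriv F := by
  rw [Derivation.leibniz, xDeriv, Derivation.mapPowerSeries_C]
  simp [smul_eq_mul]

theorem xDeriv_myExp (hF : constantCoeff F = 0) : xDeriv (myExp F) = xDeriv F * myExp F :=
  xDeriv.map_myExp (fun n _ h => Derivation.X_pow_dvd_mapPowerSeries _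
    (dvd_trans (pow_dvd_pow _ n.le_succ) h)) hF

-- `(1 - x z) F_z = b F + x(1-2x) F_x`, where `z` is the series variable `X` and `x` is
-- `Polynomial.X : 𝒫`.
def SolvesPDE (b : 𝒫) (F : 𝒫⟦X⟧) : Prop :=
  d⁄dX 𝒫 F = C b * F + C Polynomial.X * (X * d⁄dX 𝒫 F) +
    C (Polynomial.X * (1 - 2 * Polynomial.X)) * xDeriv F

theorem solvesPDE_iff {b : 𝒫} :
    SolvesPDE b F ↔ ∀ n : ℕ, coeff (n + 1) F * ((n : 𝒫) + 1) =
      (b + (n : 𝒫) * Polynomial.X) * coeff n F +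
        Polynomial.X * (1 - 2 * Polynomial.X) * Polynomial.derivative (coeff n F) := by
  rw [SolvesPDE, PowerSeries.ext_iff]
  refine forall_congr' fun n => ?_
  rw [coeff_derivative, map_add, map_add, coeff_C_mul, coeff_C_mul, coeff_C_mul,
    coeff_X_mul_derivative, coeff_xDeriv]
  constructor <;> intro h <;> linear_combination h

theorem SolvesPDE.eq {b : 𝒫} {G : 𝒫⟦X⟧} (hF : SolvesPDE b F) (hG : SolvesPDE b G)
    (h0 : constantCoeff F = constantCoeff G) : F = G := by
  rw [solvesPDE_iff] at hF hG
  refine PowerSeries.ext fun n => ?_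
  induction n with
  | zero => simpa using h0
  | succ n ih =>
    refine mul_right_cancel₀ (b := (n : 𝒫) + 1) (by exact_mod_cast n.succ_ne_zero) ?_
    rw [hF, hG, ih]

theorem solvesPDE_mk {b : 𝒫} {P : ℕ → 𝒫}
    (hP : ∀ n : ℕ, P (n + 1) = (b + (n : 𝒫) * Polynomial.X) * P n +
      Polynomial.X * (1 - 2 * Polynomial.X) * Polynomial.derivative (P n)) :
    SolvesPDE b (PowerSeries.mk fun n => (n.factorial : ℚ)⁻¹ • P n) := by
  refine solvesPDE_iff.mpr fun n => ?_
  simp only [coeff_mk, Polynomial.derivative_smul, hP n, mul_smul_comm, ← smul_add]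
  rw [smul_mul_assoc, mul_comm _ ((n : 𝒫) + 1), ← Nat.cast_succ, ← nsmul_eq_mul,
    ← Nat.cast_smul_eq_nsmul ℚ, smul_smul, inv_factorial_succ_mul_succ]

theorem Dz_eq_derivative (F : 𝒫⟦X⟧) : Dz F = d⁄dX 𝒫 F := by
  ext n
  rw [Dz, coeff_mk, coeff_derivative, nsmul_eq_mul, mul_comm]
  push_cast
  rfl

theorem SqA_succ (n : ℕ) : SqA (n + 1) =
    (Polynomial.C Polynomial.X + (n : 𝒫) * Polynomial.X) * SqA n +
      Polynomial.X * (1 - 2 * Polynomial.X) * Polynomial.derivative (SqA n) := by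
  rw [SqA, Nat.cast_smul_eq_nsmul, nsmul_one, map_natCast]

theorem SxA_succ (n : ℕ) : SxA (n + 1) =
    (1 + (n : 𝒫) * Polynomial.X) * SxA n +
      Polynomial.X * (1 - 2 * Polynomial.X) * Polynomial.derivative (SxA n) := by
  simp [SxA, SqA_succ, Polynomial.derivative_map]

theorem solvesPDE_SserQ : SolvesPDE (Polynomial.C Polynomial.X) SserQ :=
  solvesPDE_mk SqA_succ

theorem solvesPDE_Sser1 : SolvesPDE 1 Sser1 :=
  solvesPDE_mk SxA_succ

theorem constantCoeff_SserQ : constantCoeff SserQ = 1 := by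
  simp [← coeff_zero_eq_constantCoeff_apply, SserQ, SqA]

theorem constantCoeff_Sser1 : constantCoeff Sser1 = 1 := by
  simp [← coeff_zero_eq_constantCoeff_apply, Sser1, SxA, SqA]

end Bivariate

/-- `S(x,q;z) = S(x,z)^q`, where the `q`-th power is defined via `exp(q·log S(x,z))`:
for any power series `L` with zero constant term satisfying `S(x,z)·L' = S(x,z)'`
(i.e. `L = log S(x,z)`), we have `S(x,q;z) = exp(q·L)`. -/
theorem stmt17 (L : PowerSeries (Polynomial (Polynomial ℚ)))
    (hL0 : PowerSeries.coeff 0 L = 0)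
    (hL : Sser1 * Dz L = Dz Sser1) :
    SserQ = myExp (PowerSeries.C (Polynomial.C Polynomial.X) * L) := by
  set q := Polynomial.C (Polynomial.X : Polynomial ℚ)
  rw [Dz_eq_derivative, Dz_eq_derivative] at hL
  rw [coeff_zero_eq_constantCoeff_apply] at hL0
  have hqL0 : constantCoeff (C q * L) = 0 := by simp [hL0]
  have hS : myExp L = Sser1 :=
    eq_of_derivative_eq_mul (derivative_myExp hL0) (by rw [← hL, mul_comm])
      (by rw [constantCoeff_myExp, constantCoeff_Sser1])
  have hSx : xDeriv Sser1 = xDeriv L * Sser1 := by rw [← hS, xDeriv_myExp hL0]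
  have hLz : d⁄dX _ L = 1 + C Polynomial.X * (X * d⁄dX _ L) +
      C (Polynomial.X * (1 - 2 * Polynomial.X)) * xDeriv L := by
    have hSpde := solvesPDE_Sser1
    rw [SolvesPDE, ← hL, hSx, map_one] at hSpde
    refine (isUnit_iff_constantCoeff.mpr ?_).mul_left_cancel (a := Sser1) ?_
    · rw [constantCoeff_Sser1]; exact isUnit_one
    · linear_combination hSpde
  refine solvesPDE_SserQ.eq ?_ (by rw [constantCoeff_SserQ, constantCoeff_myExp])
  rw [SolvesPDE, derivative_myExp hqL0, xDeriv_myExp hqL0, derivative_C_mul, xDeriv_C_C_mul]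
  linear_combination (C q * myExp (C q * L)) * hLz
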